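/- arXiv:2512.08134 — 7 statements merged into one kernel-verified Lean document; each statement's English description precedes it below -/
import Mathlib

section
/- Suppose there exist an output index q whose q-th row of D_a is zero (an uncompromised sensor) and an integer i ≥ 0 with C_q A^i B_a ≠ 0. Choose v ∈ ℝ^{m_a} with C_q A^i B_a v ≠ 0 and define the actuator attack a_u(0) = v, a_u(k) = 0 for k ≥ 1. Then for every sensor attack sequence a_y : ℕ → ℝ^{p_a}, the q-th component of Σ_{j=0}^{i} C A^{i−j} B_a a_u(j) + D_a a_y(i+1) equals C_q A^i B_a v ≠ 0; in particular, no sensor attack sequence makes this actuator attack covert. -/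
open Matrix Finset

/-- If sensor `q` is uncompromised (`q`-th row of `Dₐ` is zero) and
`Cq Aⁱ Bₐ ≠ 0`, then with the impulse actuator attack `a_u(0) = v`, `a_u(k) = 0` for
`k ≥ 1`, where `Cq Aⁱ Bₐ v ≠ 0`, the `q`-th component of the attacked-output deviation
at time `i+1` equals `Cq Aⁱ Bₐ v ≠ 0` for every sensor attack; in particular no sensor
attack makes this actuator attack covert. -/
theorem no_covert_with_uncompromised_sensor
    (n m p ma pa : ℕ)
    (hma1 : 1 ≤ ma) (hmam : ma ≤ m) (hpa1 : 1 ≤ pa) (hpap : pa ≤ p)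
    (A : Matrix (Fin n) (Fin n) ℝ) (B : Matrix (Fin n) (Fin m) ℝ)
    (C : Matrix (Fin p) (Fin n) ℝ)
    (La : Matrix (Fin m) (Fin ma) ℝ) (Da : Matrix (Fin p) (Fin pa) ℝ)
    (ι : Fin ma → Fin m) (hι : Function.Injective ι)
    (hLa : ∀ i j, La i j = if i = ι j then 1 else 0)
    (κ : Fin pa → Fin p) (hκ : Function.Injective κ)
    (hDa : ∀ i j, Da i j = if i = κ j then 1 else 0)
    (Ba : Matrix (Fin n) (Fin ma) ℝ) (hBa : Ba = B * La)
    (q : Fin p) (hq : Da q = 0)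
    (i : ℕ) (v : Fin ma → ℝ)
    (hv : ((C * A ^ i * Ba).mulVec v) q ≠ 0)
    (au : ℕ → Fin ma → ℝ)
    (hau0 : au 0 = v) (hau : ∀ k : ℕ, 1 ≤ k → au k = 0) :
    (∀ ay : ℕ → Fin pa → ℝ,
      ((∑ j ∈ Finset.range (i + 1), (C * A ^ (i - j) * Ba).mulVec (au j))
          + Da.mulVec (ay (i + 1))) q
        = ((C * A ^ i * Ba).mulVec v) q)
    ∧ (∀ ay : ℕ → Fin pa → ℝ,
        ¬ (∀ k : ℕ,
            (∑ j ∈ Finset.range k, (C * A ^ (k - 1 - j) * Ba).mulVec (au j))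
              + Da.mulVec (ay k) = 0)) := by
  have key : ∀ ay : ℕ → Fin pa → ℝ,
      ((∑ j ∈ Finset.range (i + 1), (C * A ^ (i - j) * Ba).mulVec (au j))
          + Da.mulVec (ay (i + 1))) q
        = ((C * A ^ i * Ba).mulVec v) q := by
    intro ay
    have hsum : (∑ j ∈ Finset.range (i + 1), (C * A ^ (i - j) * Ba).mulVec (au j))
        = (C * A ^ i * Ba).mulVec v := by
      rw [Finset.sum_eq_single 0]
      · simp [hau0]
      · intro j hj hj0
        rw [hau j (Nat.one_le_iff_ne_zero.mpr hj0)]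
        simp [Matrix.mulVec_zero]
      · simp
    have hDav : Da.mulVec (ay (i + 1)) q = 0 := by
      simp [Matrix.mulVec, dotProduct, hq]
    simp [Pi.add_apply, hsum, hDav]
  refine ⟨key, fun ay hcov => ?_⟩
  have h := congrFun (hcov (i + 1)) q
  simp only [Nat.add_sub_cancel] at h
  exact hv ((key ay).symm.trans h)
end

section
/- Assume (I_p − D_a D_aᵀ) C A^i B_a = 0 for every integer i ≥ 0, and assume the minimum relative degree is finite: there exists an integer r_a ≥ 1 with C A^i B_a = 0 for all 0 ≤ i ≤ r_a − 2 and C A^{r_a − 1} B_a ≠ 0. Then for every actuator attack sequence a_u : ℕ → ℝ^{m_a}, the sensor attack sequence defined by a_y(k) = −Σ_{γ=0}^{k−r_a} D_aᵀ C A^{r_a+γ−1} B_a a_u(k−γ−r_a) for k ≥ r_a and a_y(k) = 0 for 0 ≤ k < r_a satisfies Σ_{j=0}^{k−1} C A^{k−1−j} B_a a_u(j) + D_a a_y(k) = 0 for all k ≥ 0; that is, (a_u, a_y) is a covert attack. -/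
open Matrix Finset

/-- Under the relative-degree matching condition
`(I - Dₐ Dₐᵀ) C Aⁱ Bₐ = 0` for all `i`, and finiteness of the minimum relative degree
`r_a`, the sensor attack `a_y(k) = -Σ_{γ=0}^{k-r_a} Dₐᵀ C A^{r_a+γ-1} Bₐ a_u(k-γ-r_a)`
(for `k ≥ r_a`, zero before) renders any actuator attack covert. -/
theorem covert_sensor_attack_construction
    (n m p ma pa : ℕ)
    (hma1 : 1 ≤ ma) (hmam : ma ≤ m) (hpa1 : 1 ≤ pa) (hpap : pa ≤ p)
    (A : Matrix (Fin n) (Fin n) ℝ) (B : Matrix (Fin n) (Fin m) ℝ)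
    (C : Matrix (Fin p) (Fin n) ℝ)
    (La : Matrix (Fin m) (Fin ma) ℝ) (Da : Matrix (Fin p) (Fin pa) ℝ)
    (ι : Fin ma → Fin m) (hι : Function.Injective ι)
    (hLa : ∀ i j, La i j = if i = ι j then 1 else 0)
    (κ : Fin pa → Fin p) (hκ : Function.Injective κ)
    (hDa : ∀ i j, Da i j = if i = κ j then 1 else 0)
    (Ba : Matrix (Fin n) (Fin ma) ℝ) (hBa : Ba = B * La)
    (hmatch : ∀ i : ℕ, (1 - Da * Da.transpose) * C * A ^ i * Ba = 0)
    (ra : ℕ) (hra : 1 ≤ ra)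
    (hlow : ∀ i : ℕ, i + 2 ≤ ra → C * A ^ i * Ba = 0)
    (hne : C * A ^ (ra - 1) * Ba ≠ 0)
    (au : ℕ → Fin ma → ℝ) (ay : ℕ → Fin pa → ℝ)
    (hay_zero : ∀ k : ℕ, k < ra → ay k = 0)
    (hay : ∀ k : ℕ, ra ≤ k →
      ay k = -(∑ γ ∈ Finset.range (k - ra + 1),
        (Da.transpose * C * A ^ (ra + γ - 1) * Ba).mulVec (au (k - γ - ra)))) :
    ∀ k : ℕ,
      (∑ j ∈ Finset.range k, (C * A ^ (k - 1 - j) * Ba).mulVec (au j))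
        + Da.mulVec (ay k) = 0 := by
  have hmatch' : ∀ i : ℕ, Da * (Daᵀ * C * A ^ i * Ba) = C * A ^ i * Ba := by
    intro i
    have h := hmatch i
    rw [Matrix.sub_mul, Matrix.sub_mul, Matrix.sub_mul, Matrix.one_mul, sub_eq_zero] at h
    rw [← Matrix.mul_assoc, ← Matrix.mul_assoc, ← Matrix.mul_assoc, ← h]
  intro k
  rcases lt_or_ge k ra with hk | hk
  · have hzero : ∀ j ∈ Finset.range k, (C * A ^ (k - 1 - j) * Ba).mulVec (au j) = 0 := by
      intro j hj
      rw [Finset.mem_range] at hj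
      have : k - 1 - j + 2 ≤ ra := by omega
      rw [hlow _ this, Matrix.zero_mulVec]
    rw [Finset.sum_eq_zero hzero, hay_zero k hk, Matrix.mulVec_zero, add_zero]
  · set N := k - ra + 1 with hN
    have hsum : (∑ j ∈ Finset.range k, (C * A ^ (k - 1 - j) * Ba).mulVec (au j))
        = ∑ j ∈ Finset.range N, (C * A ^ (k - 1 - j) * Ba).mulVec (au j) := by
      refine (Finset.sum_subset ?_ ?_).symm
      · intro j hj
        rw [Finset.mem_range] at hj ⊢
        omega
      · intro j hj hj'
        rw [Finset.mem_range] at hj hj'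
        have : k - 1 - j + 2 ≤ ra := by omega
        rw [hlow _ this, Matrix.zero_mulVec]
    have hDay : Da.mulVec (ay k)
        = -(∑ j ∈ Finset.range N, (C * A ^ (k - 1 - j) * Ba).mulVec (au j)) := by
      rw [hay k hk]
      have hrefl := Finset.sum_range_reflect
        (fun γ => (Da.transpose * C * A ^ (ra + γ - 1) * Ba).mulVec (au (k - γ - ra))) N
      have hcongr : ∀ j ∈ Finset.range N,
          (Da.transpose * C * A ^ (ra + (N - 1 - j) - 1) * Ba).mulVec
            (au (k - (N - 1 - j) - ra))
          = (Da.transpose * C * A ^ (k - 1 - j) * Ba).mulVec (au j) := by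
        intro j hj
        rw [Finset.mem_range] at hj
        have h1 : ra + (N - 1 - j) - 1 = k - 1 - j := by omega
        have h2 : k - (N - 1 - j) - ra = j := by omega
        rw [h1, h2]
      rw [Matrix.mulVec_neg, neg_inj, ← hrefl, Finset.sum_congr rfl hcongr,
        ← Matrix.mulVecLin_apply, map_sum]
      refine Finset.sum_congr rfl fun j _ => ?_
      rw [Matrix.mulVecLin_apply, Matrix.mulVec_mulVec, hmatch']
    rw [hsum, hDay, add_neg_cancel]
end

section
/- Suppose there exists a sequence a_u : ℕ → ℝ^{m_a}, not identically zero, such that (I_p − D_a D_aᵀ) Σ_{j=0}^{k−1} C A^{k−1−j} B_a a_u(j) = 0 for every k ≥ 0 (i.e., the triple ((I_p − D_a D_aᵀ)C, A, B_a) is not left-invertible: a nonzero input produces identically zero output from zero initial state). Then, defining a_y(k) := −D_aᵀ Σ_{j=0}^{k−1} C A^{k−1−j} B_a a_u(j), the pair (a_u, a_y) is covert: Σ_{j=0}^{k−1} C A^{k−1−j} B_a a_u(j) + D_a a_y(k) = 0 for every k ≥ 0. -/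
open Matrix Finset

/-- If a not-identically-zero actuator attack `a_u` produces identically
zero output through `((I - Dₐ Dₐᵀ)C, A, Bₐ)` (non-left-invertibility), then with
`a_y(k) := -Dₐᵀ Σ_{j<k} C A^{k-1-j} Bₐ a_u(j)`, the pair `(a_u, a_y)` is covert. -/
theorem covert_from_non_left_invertibility
    (n m p ma pa : ℕ)
    (hma1 : 1 ≤ ma) (hmam : ma ≤ m) (hpa1 : 1 ≤ pa) (hpap : pa ≤ p)
    (A : Matrix (Fin n) (Fin n) ℝ) (B : Matrix (Fin n) (Fin m) ℝ)
    (C : Matrix (Fin p) (Fin n) ℝ)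
    (La : Matrix (Fin m) (Fin ma) ℝ) (Da : Matrix (Fin p) (Fin pa) ℝ)
    (ι : Fin ma → Fin m) (hι : Function.Injective ι)
    (hLa : ∀ i j, La i j = if i = ι j then 1 else 0)
    (κ : Fin pa → Fin p) (hκ : Function.Injective κ)
    (hDa : ∀ i j, Da i j = if i = κ j then 1 else 0)
    (Ba : Matrix (Fin n) (Fin ma) ℝ) (hBa : Ba = B * La)
    (au : ℕ → Fin ma → ℝ) (hau_ne : au ≠ 0)
    (hker : ∀ k : ℕ,
      (1 - Da * Da.transpose).mulVec
        (∑ j ∈ Finset.range k, (C * A ^ (k - 1 - j) * Ba).mulVec (au j)) = 0)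
    (ay : ℕ → Fin pa → ℝ)
    (hay : ∀ k : ℕ,
      ay k = -(Da.transpose.mulVec
        (∑ j ∈ Finset.range k, (C * A ^ (k - 1 - j) * Ba).mulVec (au j)))) :
    ∀ k : ℕ,
      (∑ j ∈ Finset.range k, (C * A ^ (k - 1 - j) * Ba).mulVec (au j))
        + Da.mulVec (ay k) = 0 := by
  intro k
  have h := hker k
  rw [sub_mulVec, one_mulVec] at h
  rw [hay k, mulVec_neg, mulVec_mulVec]
  linear_combination (norm := module) h
end

section
/- Assume the matching conditions hold and the decoder is driven by the encoder output, v(k) = u_e(k). Then for every input sequence u : ℕ → ℝ^m and every k ≥ 0, the cascade satisfies x_d(k) = T x_e(k) and u_d(k) = u(k); that is, the decoder exactly inverts the encoder. -/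
open Matrix Finset

/-- Under the matching conditions (Lemma on encoder/decoder), when the
decoder is driven by the encoder output, the cascade satisfies `x_d(k) = T x_e(k)`
and `u_d(k) = u(k)` for every input sequence `u` and every `k ≥ 0`. -/
theorem decoder_inverts_encoder
    (m : ℕ)
    (Ae Be Ce De Ad Bd Cd Dd T : Matrix (Fin m) (Fin m) ℝ)
    (hT : IsUnit T) (hDe : IsUnit De)
    (hDd : Dd = De⁻¹)
    (hC : Dd * Ce + Cd * T = 0)
    (hB : T⁻¹ * Bd * De = Be)
    (hA : T⁻¹ * Ad * T + T⁻¹ * Bd * Ce = Ae)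
    (u : ℕ → Fin m → ℝ)
    (xe xd ue ud v : ℕ → Fin m → ℝ)
    (hxe0 : xe 0 = 0) (hxd0 : xd 0 = 0)
    (hxe : ∀ k : ℕ, xe (k + 1) = Ae.mulVec (xe k) + Be.mulVec (u k))
    (hue : ∀ k : ℕ, ue k = Ce.mulVec (xe k) + De.mulVec (u k))
    (hv : ∀ k : ℕ, v k = ue k)
    (hxd : ∀ k : ℕ, xd (k + 1) = Ad.mulVec (xd k) + Bd.mulVec (v k))
    (hud : ∀ k : ℕ, ud k = Cd.mulVec (xd k) + Dd.mulVec (v k)) :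
    ∀ k : ℕ, xd k = T.mulVec (xe k) ∧ ud k = u k := by
  have hdetT : IsUnit T.det := (Matrix.isUnit_iff_isUnit_det T).mp hT
  have hdetDe : IsUnit De.det := (Matrix.isUnit_iff_isUnit_det De).mp hDe
  have cancel : ∀ X : Matrix (Fin m) (Fin m) ℝ, T * (T⁻¹ * X) = X := fun X => by
    rw [← Matrix.mul_assoc, Matrix.mul_nonsing_inv T hdetT, Matrix.one_mul]
  have key : ∀ k, xd k = T.mulVec (xe k) := by
    intro k
    induction k with
    | zero => simp [hxd0, hxe0]
    | succ k ih =>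
      rw [hxd, hxe, ih, hv, hue, ← hB, ← hA]
      simp only [Matrix.mulVec_add, Matrix.mulVec_mulVec, Matrix.add_mulVec,
        Matrix.mul_add, Matrix.mul_assoc, cancel]
      abel
  intro k
  refine ⟨key k, ?_⟩
  rw [hud, hv, hue, key k]
  simp only [Matrix.mulVec_add, Matrix.mulVec_mulVec]
  have h1 : Cd * T + Dd * Ce = 0 := by rw [add_comm]; exact hC
  have h2 : Dd * De = 1 := by rw [hDd]; exact Matrix.nonsing_inv_mul De hdetDe
  calc (Cd * T).mulVec (xe k) + ((Dd * Ce).mulVec (xe k) + (Dd * De).mulVec (u k))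
      = (Cd * T + Dd * Ce).mulVec (xe k) + (Dd * De).mulVec (u k) := by
        rw [Matrix.add_mulVec]; abel
    _ = u k := by rw [h1, h2]; simp
end

section
/- Assume the matching conditions hold and the decoder is driven by the attacked encoder output, v(k) = u_e(k) + L_a a_u(k), where L_a is the m×m_a matrix whose columns are distinct standard basis vectors of ℝ^m and a_u : ℕ → ℝ^{m_a}. Then for every input sequence u : ℕ → ℝ^m and every k ≥ 0: u_d(k) = u(k) + D_d L_a a_u(k) + Σ_{j=0}^{k−1} C_d A_d^{k−1−j} B_d L_a a_u(j). -/
/-!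
Write `e k = x_d(k) - T x_e(k)` for the mismatch between the decoder state and the transformed
encoder state. The matching conditions make the encoder contributions to `e(k + 1)` cancel, so `e`
is the zero-initial-state response of `(A_d, B_d)` to the injected signal `L_a a_u` alone, i.e.
`e k = Σ_{j<k} A_d^{k-1-j} B_d L_a a_u(j)`. In the decoder output, `C_d T + D_d C_e = 0` removes
the encoder state and `D_d D_e = 1` returns `u(k)`, leaving the stated attack terms.
-/

open Matrix Finset

section

variable {R : Type*} {n p : Type*} [Fintype n] [DecidableEq n]

theorem eq_sum_pow_mulVec_of_succ [Semiring R] (A : Matrix n n R) {x w : ℕ → n → R}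
    (h0 : x 0 = 0) (hsucc : ∀ k, x (k + 1) = A *ᵥ x k + w k) (k : ℕ) :
    x k = ∑ j ∈ range k, A ^ (k - 1 - j) *ᵥ w j := by
  induction k with
  | zero => simp [h0]
  | succ k ih =>
    have hpow : ∀ j ∈ range k, A ^ (k + 1 - 1 - j) *ᵥ w j = A *ᵥ A ^ (k - 1 - j) *ᵥ w j := by
      intro j hj
      rw [mulVec_mulVec, ← pow_succ', show k - 1 - j + 1 = k + 1 - 1 - j by
        have := mem_range.mp hj; omega]
    rw [hsucc, ih, sum_range_succ, sum_congr rfl hpow, mulVec_sum, Nat.add_sub_cancel,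
      Nat.sub_self, pow_zero, one_mulVec]

variable [Fintype p] [Ring R]
  {Ae Ad T : Matrix n n R} {Be Bd : Matrix n p R} {Ce Cd : Matrix p n R} {De Dd : Matrix p p R}
  {u w : ℕ → p → R} {xe xd : ℕ → n → R}

theorem decoder_state_eq_add_sum (hA : Ad * T + Bd * Ce = T * Ae) (hB : Bd * De = T * Be)
    (hxe0 : xe 0 = 0) (hxd0 : xd 0 = 0)
    (hxe : ∀ k, xe (k + 1) = Ae *ᵥ xe k + Be *ᵥ u k)
    (hxd : ∀ k, xd (k + 1) = Ad *ᵥ xd k + Bd *ᵥ (Ce *ᵥ xe k + De *ᵥ u k + w k)) (k : ℕ) :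
    xd k = T *ᵥ xe k + ∑ j ∈ range k, Ad ^ (k - 1 - j) *ᵥ Bd *ᵥ w j := by
  have hmismatch : ∀ k, xd (k + 1) - T *ᵥ xe (k + 1)
      = Ad *ᵥ (xd k - T *ᵥ xe k) + Bd *ᵥ w k := by
    intro k
    have hTA : T *ᵥ Ae *ᵥ xe k = Ad *ᵥ T *ᵥ xe k + Bd *ᵥ Ce *ᵥ xe k := by
      simp only [mulVec_mulVec, ← add_mulVec, hA]
    have hTB : T *ᵥ Be *ᵥ u k = Bd *ᵥ De *ᵥ u k := by simp only [mulVec_mulVec, hB]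
    simp only [hxd, hxe, mulVec_add, mulVec_sub, hTA, hTB]
    abel
  rw [← sub_eq_iff_eq_add']
  exact eq_sum_pow_mulVec_of_succ Ad (x := fun k ↦ xd k - T *ᵥ xe k) (by simp [hxe0, hxd0])
    hmismatch k

theorem decoder_output_eq_add_sum [DecidableEq p]
    (hA : Ad * T + Bd * Ce = T * Ae) (hB : Bd * De = T * Be)
    (hC : Dd * Ce + Cd * T = 0) (hD : Dd * De = 1)
    (hxe0 : xe 0 = 0) (hxd0 : xd 0 = 0)
    (hxe : ∀ k, xe (k + 1) = Ae *ᵥ xe k + Be *ᵥ u k)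
    (hxd : ∀ k, xd (k + 1) = Ad *ᵥ xd k + Bd *ᵥ (Ce *ᵥ xe k + De *ᵥ u k + w k)) (k : ℕ) :
    Cd *ᵥ xd k + Dd *ᵥ (Ce *ᵥ xe k + De *ᵥ u k + w k)
      = u k + Dd *ᵥ w k + ∑ j ∈ range k, Cd *ᵥ Ad ^ (k - 1 - j) *ᵥ Bd *ᵥ w j := by
  have hcancel : Dd *ᵥ Ce *ᵥ xe k + Cd *ᵥ T *ᵥ xe k = 0 := by
    simp only [mulVec_mulVec, ← add_mulVec, hC, zero_mulVec]
  have hinv : Dd *ᵥ De *ᵥ u k = u k := by rw [mulVec_mulVec, hD, one_mulVec]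
  rw [decoder_state_eq_add_sum hA hB hxe0 hxd0 hxe hxd, mulVec_add, mulVec_sum, mulVec_add,
    mulVec_add]
  linear_combination (norm := module) hcancel + hinv

end

theorem decoder_output_under_attack_general
    (m ma : ℕ)
    (Ae Be Ce De Ad Bd Cd Dd T : Matrix (Fin m) (Fin m) ℝ)
    (hT : IsUnit T) (hDe : IsUnit De)
    (hDd : Dd = De⁻¹)
    (hC : Dd * Ce + Cd * T = 0)
    (hB : T⁻¹ * Bd * De = Be)
    (hA : T⁻¹ * Ad * T + T⁻¹ * Bd * Ce = Ae)
    (La : Matrix (Fin m) (Fin ma) ℝ)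
    (au : ℕ → Fin ma → ℝ)
    (u : ℕ → Fin m → ℝ)
    (xe xd ue ud v : ℕ → Fin m → ℝ)
    (hxe0 : xe 0 = 0) (hxd0 : xd 0 = 0)
    (hxe : ∀ k : ℕ, xe (k + 1) = Ae.mulVec (xe k) + Be.mulVec (u k))
    (hue : ∀ k : ℕ, ue k = Ce.mulVec (xe k) + De.mulVec (u k))
    (hv : ∀ k : ℕ, v k = ue k + La.mulVec (au k))
    (hxd : ∀ k : ℕ, xd (k + 1) = Ad.mulVec (xd k) + Bd.mulVec (v k))
    (hud : ∀ k : ℕ, ud k = Cd.mulVec (xd k) + Dd.mulVec (v k)) :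
    ∀ k : ℕ,
      ud k = u k + (Dd * La).mulVec (au k)
        + ∑ j ∈ Finset.range k, (Cd * Ad ^ (k - 1 - j) * Bd * La).mulVec (au j) := by
  have hTT : T * T⁻¹ = 1 := mul_nonsing_inv T ((isUnit_iff_isUnit_det T).mp hT)
  have hA' : Ad * T + Bd * Ce = T * Ae := by
    simp only [← hA, mul_add, ← mul_assoc, hTT, one_mul]
  have hB' : Bd * De = T * Be := by simp only [← hB, ← mul_assoc, hTT, one_mul]
  have hD : Dd * De = 1 := hDd ▸ nonsing_inv_mul De ((isUnit_iff_isUnit_det De).mp hDe)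
  have hxd' : ∀ k, xd (k + 1) = Ad *ᵥ xd k + Bd *ᵥ (Ce *ᵥ xe k + De *ᵥ u k + La *ᵥ au k) :=
    fun k ↦ by rw [hxd, hv, hue]
  intro k
  rw [hud, hv, hue, decoder_output_eq_add_sum hA' hB' hC hD hxe0 hxd0 hxe hxd' k]
  simp only [mulVec_mulVec, Matrix.mul_assoc]

/-- Under the matching conditions, when the decoder is driven by the
attacked encoder output `v(k) = u_e(k) + Lₐ a_u(k)`, the decoder output satisfies
`u_d(k) = u(k) + D_d Lₐ a_u(k) + Σ_{j<k} C_d A_d^{k-1-j} B_d Lₐ a_u(j)`. -/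
theorem decoder_output_under_attack
    (m ma : ℕ) (hma1 : 1 ≤ ma) (hmam : ma ≤ m)
    (Ae Be Ce De Ad Bd Cd Dd T : Matrix (Fin m) (Fin m) ℝ)
    (hT : IsUnit T) (hDe : IsUnit De)
    (hDd : Dd = De⁻¹)
    (hC : Dd * Ce + Cd * T = 0)
    (hB : T⁻¹ * Bd * De = Be)
    (hA : T⁻¹ * Ad * T + T⁻¹ * Bd * Ce = Ae)
    (La : Matrix (Fin m) (Fin ma) ℝ)
    (ι : Fin ma → Fin m) (hι : Function.Injective ι)
    (hLa : ∀ i j, La i j = if i = ι j then 1 else 0)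
    (au : ℕ → Fin ma → ℝ)
    (u : ℕ → Fin m → ℝ)
    (xe xd ue ud v : ℕ → Fin m → ℝ)
    (hxe0 : xe 0 = 0) (hxd0 : xd 0 = 0)
    (hxe : ∀ k : ℕ, xe (k + 1) = Ae.mulVec (xe k) + Be.mulVec (u k))
    (hue : ∀ k : ℕ, ue k = Ce.mulVec (xe k) + De.mulVec (u k))
    (hv : ∀ k : ℕ, v k = ue k + La.mulVec (au k))
    (hxd : ∀ k : ℕ, xd (k + 1) = Ad.mulVec (xd k) + Bd.mulVec (v k))
    (hud : ∀ k : ℕ, ud k = Cd.mulVec (xd k) + Dd.mulVec (v k)) :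
    ∀ k : ℕ,
      ud k = u k + (Dd * La).mulVec (au k)
        + ∑ j ∈ Finset.range k, (Cd * Ad ^ (k - 1 - j) * Bd * La).mulVec (au j) :=
  decoder_output_under_attack_general m ma Ae Be Ce De Ad Bd Cd Dd T hT hDe hDd hC hB hA La au u xe
    xd ue ud v hxe0 hxd0 hxe hue hv hxd hud
end

section
/- Assume the matching conditions hold, the decoder is driven by v(k) = u_e(k) + L_a a_u(k), and the plant evolves as x(k+1) = A x(k) + B u_d(k) with output y(k) = C x(k) + D_a a_y(k). Then for every initial state x(0), every input sequence u, every a_u : ℕ → ℝ^{m_a}, every a_y : ℕ → ℝ^{p_a}, and every k ≥ 0: y(k) = C A^k x(0) + Σ_{j=0}^{k−1} C A^{k−1−j} B u(j) + Σ_{j=0}^{k−1} C A^{k−1−j} B ( D_d L_a a_u(j) + Σ_{i=0}^{j−1} C_d A_d^{j−1−i} B_d L_a a_u(i) ) + D_a a_y(k). -/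
open Matrix Finset

private lemma mv_sum {N M : Type*} [Fintype M] (Q : Matrix N M ℝ) (s : Finset ℕ)
    (f : ℕ → M → ℝ) : Q.mulVec (∑ i ∈ s, f i) = ∑ i ∈ s, Q.mulVec (f i) := by
  simp only [← Matrix.mulVecLin_apply, map_sum]

/-- Closed-loop output formula for the coded CPS under actuator and
sensor attacks: `y(k) = C A^k x(0) + Σ_{j<k} C A^{k-1-j} B u(j)
+ Σ_{j<k} C A^{k-1-j} B (D_d Lₐ a_u(j) + Σ_{i<j} C_d A_d^{j-1-i} B_d Lₐ a_u(i))
+ Dₐ a_y(k)`. -/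
theorem coded_cps_output_formula
    (n m p ma pa : ℕ)
    (hma1 : 1 ≤ ma) (hmam : ma ≤ m) (hpa1 : 1 ≤ pa) (hpap : pa ≤ p)
    (A : Matrix (Fin n) (Fin n) ℝ) (B : Matrix (Fin n) (Fin m) ℝ)
    (C : Matrix (Fin p) (Fin n) ℝ)
    (La : Matrix (Fin m) (Fin ma) ℝ) (Da : Matrix (Fin p) (Fin pa) ℝ)
    (ι : Fin ma → Fin m) (hι : Function.Injective ι)
    (hLa : ∀ i j, La i j = if i = ι j then 1 else 0)
    (κ : Fin pa → Fin p) (hκ : Function.Injective κ)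
    (hDa : ∀ i j, Da i j = if i = κ j then 1 else 0)
    (Ae Be Ce De Ad Bd Cd Dd T : Matrix (Fin m) (Fin m) ℝ)
    (hT : IsUnit T) (hDe : IsUnit De)
    (hDd : Dd = De⁻¹)
    (hC : Dd * Ce + Cd * T = 0)
    (hB : T⁻¹ * Bd * De = Be)
    (hA : T⁻¹ * Ad * T + T⁻¹ * Bd * Ce = Ae)
    (au : ℕ → Fin ma → ℝ) (ay : ℕ → Fin pa → ℝ)
    (u : ℕ → Fin m → ℝ)
    (xe xd ue ud v : ℕ → Fin m → ℝ)
    (hxe0 : xe 0 = 0) (hxd0 : xd 0 = 0)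
    (hxe : ∀ k : ℕ, xe (k + 1) = Ae.mulVec (xe k) + Be.mulVec (u k))
    (hue : ∀ k : ℕ, ue k = Ce.mulVec (xe k) + De.mulVec (u k))
    (hv : ∀ k : ℕ, v k = ue k + La.mulVec (au k))
    (hxd : ∀ k : ℕ, xd (k + 1) = Ad.mulVec (xd k) + Bd.mulVec (v k))
    (hud : ∀ k : ℕ, ud k = Cd.mulVec (xd k) + Dd.mulVec (v k))
    (x : ℕ → Fin n → ℝ) (y : ℕ → Fin p → ℝ)
    (hx : ∀ k : ℕ, x (k + 1) = A.mulVec (x k) + B.mulVec (ud k))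
    (hy : ∀ k : ℕ, y k = C.mulVec (x k) + Da.mulVec (ay k)) :
    ∀ k : ℕ,
      y k = (C * A ^ k).mulVec (x 0)
        + (∑ j ∈ Finset.range k, (C * A ^ (k - 1 - j) * B).mulVec (u j))
        + (∑ j ∈ Finset.range k, (C * A ^ (k - 1 - j) * B).mulVec
            ((Dd * La).mulVec (au j)
              + ∑ i ∈ Finset.range j, (Cd * Ad ^ (j - 1 - i) * Bd * La).mulVec (au i)))
        + Da.mulVec (ay k) := by
  have hTd : IsUnit T.det := (Matrix.isUnit_iff_isUnit_det T).mp hT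
  have hDed : IsUnit De.det := (Matrix.isUnit_iff_isUnit_det De).mp hDe
  have hTT : T * T⁻¹ = 1 := Matrix.mul_nonsing_inv T hTd
  have hDdDe : Dd * De = 1 := by rw [hDd]; exact Matrix.nonsing_inv_mul De hDed
  -- matching relations in multiplied form
  have hA2 : Ad * T + Bd * Ce = T * Ae := by
    rw [← hA, mul_add, ← mul_assoc, ← mul_assoc, ← mul_assoc, ← mul_assoc, hTT,
      one_mul, one_mul]
  have hB2 : Bd * De = T * Be := by
    rw [← hB, ← mul_assoc, ← mul_assoc, hTT, one_mul]
  -- decoder state invariant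
  have hxdk : ∀ k : ℕ, xd k = T.mulVec (xe k)
      + ∑ i ∈ Finset.range k, (Ad ^ (k - 1 - i) * Bd * La).mulVec (au i) := by
    intro k
    induction k with
    | zero => simp [hxd0, hxe0]
    | succ k ih =>
      rw [hxd, ih, hv, hue, hxe]
      rw [Finset.sum_range_succ]
      have hlast : (Ad ^ (k + 1 - 1 - k) * Bd * La).mulVec (au k) =
          Bd.mulVec (La.mulVec (au k)) := by
        simp [Matrix.mulVec_mulVec]
      rw [hlast]
      have hsum : Ad.mulVec (∑ i ∈ Finset.range k,
            (Ad ^ (k - 1 - i) * Bd * La).mulVec (au i)) =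
          ∑ i ∈ Finset.range k, (Ad ^ (k + 1 - 1 - i) * Bd * La).mulVec (au i) := by
        rw [mv_sum]
        refine Finset.sum_congr rfl fun i hi => ?_
        rw [Matrix.mulVec_mulVec]
        have hi' : i < k := Finset.mem_range.mp hi
        have he : k + 1 - 1 - i = (k - 1 - i) + 1 := by omega
        rw [he, pow_succ']
        simp only [Matrix.mul_assoc]
      have h1 : Ad.mulVec (T.mulVec (xe k)) + Bd.mulVec (Ce.mulVec (xe k)) =
          T.mulVec (Ae.mulVec (xe k)) := by
        simp only [Matrix.mulVec_mulVec, ← Matrix.add_mulVec, hA2]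
      have h2 : Bd.mulVec (De.mulVec (u k)) = T.mulVec (Be.mulVec (u k)) := by
        simp only [Matrix.mulVec_mulVec, hB2]
      simp only [Matrix.mulVec_add]
      rw [hsum, ← h1, ← h2]
      abel
  -- closed form of the decoded input
  set w : ℕ → Fin m → ℝ := fun k =>
    (Dd * La).mulVec (au k)
      + ∑ i ∈ Finset.range k, (Cd * Ad ^ (k - 1 - i) * Bd * La).mulVec (au i) with hw
  have hudk : ∀ k : ℕ, ud k = u k + w k := by
    intro k
    rw [hud, hxdk, hv, hue]
    have hCd : Cd.mulVec (T.mulVec (xe k)) + Dd.mulVec (Ce.mulVec (xe k)) = 0 := by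
      simp only [Matrix.mulVec_mulVec, ← Matrix.add_mulVec]
      have : Dd * Ce + Cd * T = 0 := hC
      rw [show Cd * T + Dd * Ce = Dd * Ce + Cd * T from add_comm _ _, this,
        Matrix.zero_mulVec]
    have hu : Dd.mulVec (De.mulVec (u k)) = u k := by
      simp only [Matrix.mulVec_mulVec, hDdDe, Matrix.one_mulVec]
    have hsum : Cd.mulVec (∑ i ∈ Finset.range k,
          (Ad ^ (k - 1 - i) * Bd * La).mulVec (au i)) =
        ∑ i ∈ Finset.range k, (Cd * Ad ^ (k - 1 - i) * Bd * La).mulVec (au i) := by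
      rw [mv_sum]
      refine Finset.sum_congr rfl fun i _ => ?_
      rw [Matrix.mulVec_mulVec]
      simp only [Matrix.mul_assoc]
    have hLaa : Dd.mulVec (La.mulVec (au k)) = (Dd * La).mulVec (au k) := by
      rw [Matrix.mulVec_mulVec]
    simp only [Matrix.mulVec_add, hw]
    rw [hsum]
    calc Cd.mulVec (T.mulVec (xe k)) +
          (∑ i ∈ Finset.range k, (Cd * Ad ^ (k - 1 - i) * Bd * La).mulVec (au i)) +
          (Dd.mulVec (Ce.mulVec (xe k)) + Dd.mulVec (De.mulVec (u k)) +
            Dd.mulVec (La.mulVec (au k)))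
        = (Cd.mulVec (T.mulVec (xe k)) + Dd.mulVec (Ce.mulVec (xe k))) +
          Dd.mulVec (De.mulVec (u k)) + (Dd.mulVec (La.mulVec (au k)) +
            ∑ i ∈ Finset.range k, (Cd * Ad ^ (k - 1 - i) * Bd * La).mulVec (au i)) := by
          abel
      _ = u k + ((Dd * La).mulVec (au k) +
            ∑ i ∈ Finset.range k, (Cd * Ad ^ (k - 1 - i) * Bd * La).mulVec (au i)) := by
          rw [hCd, hu, hLaa, zero_add]
  -- plant state formula
  have hxk : ∀ k : ℕ, x k = (A ^ k).mulVec (x 0)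
      + ∑ j ∈ Finset.range k, (A ^ (k - 1 - j) * B).mulVec (ud j) := by
    intro k
    induction k with
    | zero => simp
    | succ k ih =>
      rw [hx, ih, Finset.sum_range_succ]
      have hlast : (A ^ (k + 1 - 1 - k) * B).mulVec (ud k) = B.mulVec (ud k) := by
        simp
      rw [hlast]
      simp only [Matrix.mulVec_add, mv_sum, Matrix.mulVec_mulVec]
      have h0 : A * A ^ k = A ^ (k + 1) := (pow_succ' A k).symm
      rw [h0]
      have hsum : ∑ j ∈ Finset.range k, (A * (A ^ (k - 1 - j) * B)).mulVec (ud j) =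
          ∑ j ∈ Finset.range k, (A ^ (k + 1 - 1 - j) * B).mulVec (ud j) := by
        refine Finset.sum_congr rfl fun j hj => ?_
        have hj' : j < k := Finset.mem_range.mp hj
        have he : k + 1 - 1 - j = (k - 1 - j) + 1 := by omega
        rw [he, pow_succ']
        simp only [Matrix.mul_assoc]
      rw [hsum]
      abel
  -- conclusion
  intro k
  rw [hy, hxk, Matrix.mulVec_add, mv_sum, Matrix.mulVec_mulVec]
  have hsplit : ∑ j ∈ Finset.range k, C.mulVec ((A ^ (k - 1 - j) * B).mulVec (ud j)) =
      (∑ j ∈ Finset.range k, (C * A ^ (k - 1 - j) * B).mulVec (u j)) +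
      ∑ j ∈ Finset.range k, (C * A ^ (k - 1 - j) * B).mulVec (w j) := by
    rw [← Finset.sum_add_distrib]
    refine Finset.sum_congr rfl fun j _ => ?_
    rw [hudk j]
    simp only [Matrix.mulVec_add, Matrix.mulVec_mulVec, Matrix.mul_assoc]
  rw [hsplit]
  abel
end

section
/- Let r ≥ 1 be an integer with C A^i B D_d L_a = 0 for all 0 ≤ i ≤ r−2 and C A^{r−1} B D_d L_a ≠ 0 (the minimum relative degree of the coded system with respect to the actuator attack). Let q1 and q2 be secure output indices (the q1-th and q2-th rows of D_a are zero). Assume: (1) C_{q1} A^{r−1} B D_d L_a = 0, and (2) ker(C_{q2} A^{r−1} B D_d L_a) ∩ ker(C_{q1} A^{r} B D_d L_a) = {0}, where the kernels are those of the corresponding linear maps ℝ^{m_a} → ℝ. If a_u(0) ∈ ℝ^{m_a} is nonzero and there exists a_y(r) ∈ ℝ^{p_a} with C A^{r−1} B D_d L_a a_u(0) + D_a a_y(r) = 0, then C_{q1} A^{r} B D_d L_a a_u(0) ≠ 0. -/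
open Matrix Finset

/-- In the coded system with minimum relative degree `r`, if the secure
outputs `q1, q2` satisfy conditions (1) `C_{q1} A^{r-1} B D_d Lₐ = 0` and
(2) `ker(C_{q2} A^{r-1} B D_d Lₐ) ∩ ker(C_{q1} A^r B D_d Lₐ) = {0}`, then any nonzero
`a_u(0)` whose time-`r` output contribution is cancellable by some `a_y(r)` must
satisfy `C_{q1} A^r B D_d Lₐ a_u(0) ≠ 0`. -/
theorem coding_exposes_attack_at_secure_output
    (n m p ma pa : ℕ)
    (hma1 : 1 ≤ ma) (hmam : ma ≤ m) (hpa1 : 1 ≤ pa) (hpap : pa ≤ p)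
    (A : Matrix (Fin n) (Fin n) ℝ) (B : Matrix (Fin n) (Fin m) ℝ)
    (C : Matrix (Fin p) (Fin n) ℝ)
    (Ad Bd Cd Dd : Matrix (Fin m) (Fin m) ℝ)
    (La : Matrix (Fin m) (Fin ma) ℝ) (Da : Matrix (Fin p) (Fin pa) ℝ)
    (ι : Fin ma → Fin m) (hι : Function.Injective ι)
    (hLa : ∀ i j, La i j = if i = ι j then 1 else 0)
    (κ : Fin pa → Fin p) (hκ : Function.Injective κ)
    (hDa : ∀ i j, Da i j = if i = κ j then 1 else 0)
    (r : ℕ) (hr : 1 ≤ r)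
    (hlow : ∀ i : ℕ, i + 2 ≤ r → C * A ^ i * B * Dd * La = 0)
    (hne : C * A ^ (r - 1) * B * Dd * La ≠ 0)
    (q1 q2 : Fin p) (hq1 : Da q1 = 0) (hq2 : Da q2 = 0)
    (hcond1 : (C * A ^ (r - 1) * B * Dd * La) q1 = 0)
    (hcond2 : ∀ w : Fin ma → ℝ,
      ((C * A ^ (r - 1) * B * Dd * La).mulVec w) q2 = 0 →
      ((C * A ^ r * B * Dd * La).mulVec w) q1 = 0 → w = 0)
    (au0 : Fin ma → ℝ) (hau0 : au0 ≠ 0)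
    (hcancel : ∃ ayr : Fin pa → ℝ,
      (C * A ^ (r - 1) * B * Dd * La).mulVec au0 + Da.mulVec ayr = 0) :
    ((C * A ^ r * B * Dd * La).mulVec au0) q1 ≠ 0 := by
  intro h
  obtain ⟨ayr, hay⟩ := hcancel
  have hq2z : ((C * A ^ (r - 1) * B * Dd * La).mulVec au0) q2 = 0 := by
    have := congrFun hay q2
    simp only [Pi.add_apply, Pi.zero_apply] at this
    have hDz : (Da.mulVec ayr) q2 = 0 := by
      simp [Matrix.mulVec, dotProduct, hq2]
    linarith
  exact hau0 (hcond2 au0 hq2z h)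
end
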